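/- Let A and B be anti-Hermitian matrices. Then for any positive integer p, e^{A+B} = e^A + Σ_{l=1}^{p-1} ∫₀¹∫₀^{s₁}⋯∫₀^{s_{l-1}} e^{A(1-s₁)} B e^{A(s₁-s₂)} B ⋯ e^{A(s_{l-1}-s_l)} B e^{A s_l} ds_l⋯ds₁ + R_p(A,B), where ‖R_p(A,B)‖ ≤ ‖B‖^p / p!. -/

import Mathlib

/-!
Duhamel's formula `e^{t(a+b)} = e^{ta} + ∫₀ᵗ e^{(t-s)a} b e^{s(a+b)} ds`, substituted into the
innermost factor `e^{s(a+b)}` of the `l`-th remainder, splits it into the `l`-th Dyson term plus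
the `(l+1)`-th remainder, so the expansion telescopes. For anti-Hermitian `A` and `B` the
propagators `e^{τA}` and `e^{τ(A+B)}` are unitary, hence contractions, so each integration step
costs a factor `‖B‖` and turns `s^l / l!` into `t^(l+1) / (l+1)!`.
-/

open scoped Matrix Matrix.Norms.L2Operator
open MeasureTheory NormedSpace

/-- The nested iterated integral ending with the full propagator `e^{(A+B)s}`:
`R A B p 1` equals
`∫₀¹∫₀^{s₁}⋯∫₀^{s_{p-1}} e^{A(1-s₁)} B e^{A(s₁-s₂)} B ⋯ e^{A(s_{p-1}-s_p)} B e^{(A+B)s_p} ds_p⋯ds₁`. -/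
noncomputable def remainderIntegral {N : ℕ} (A B : Matrix (Fin N) (Fin N) ℂ) :
    ℕ → ℝ → Matrix (Fin N) (Fin N) ℂ
  | 0, t => exp (t • (A + B))
  | (l + 1), t => ∫ s in (0:ℝ)..t, exp ((t - s) • A) * B * remainderIntegral A B l s

/-- The nested iterated integral ending with the unperturbed propagator `e^{A s}`:
`dysonTerm A B l 1` equals
`∫₀¹∫₀^{s₁}⋯∫₀^{s_{l-1}} e^{A(1-s₁)} B e^{A(s₁-s₂)} B ⋯ e^{A(s_{l-1}-s_l)} B e^{A s_l} ds_l⋯ds₁`. -/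
noncomputable def dysonTerm {N : ℕ} (A B : Matrix (Fin N) (Fin N) ℂ) :
    ℕ → ℝ → Matrix (Fin N) (Fin N) ℂ
  | 0, t => exp (t • A)
  | (l + 1), t => ∫ s in (0:ℝ)..t, exp ((t - s) • A) * B * dysonTerm A B l s

open scoped Nat

section Duhamel

variable {𝔸 : Type*} [NormedRing 𝔸] [NormedAlgebra ℝ 𝔸]

noncomputable def duhamelIntegral (a b : 𝔸) (f : ℝ → 𝔸) (t : ℝ) : 𝔸 :=
  ∫ s in (0:ℝ)..t, exp ((t - s) • a) * b * f s

theorem norm_duhamelIntegral_le {a : 𝔸} (b : 𝔸) (ha : ∀ τ : ℝ, 0 ≤ τ → ‖exp (τ • a)‖ ≤ 1)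
    {f : ℝ → 𝔸} {C : ℝ} {n : ℕ} (hf : ∀ s, 0 ≤ s → ‖f s‖ ≤ C * s ^ n) {t : ℝ} (ht : 0 ≤ t) :
    ‖duhamelIntegral a b f t‖ ≤ ‖b‖ * C * (t ^ (n + 1) / (n + 1)) := by
  have hpointwise : ∀ s ∈ Set.Ioc 0 t, ‖exp ((t - s) • a) * b * f s‖ ≤ ‖b‖ * C * s ^ n := by
    intro s hs
    calc ‖exp ((t - s) • a) * b * f s‖ ≤ ‖exp ((t - s) • a)‖ * (‖b‖ * ‖f s‖) := by
          rw [mul_assoc]; exact norm_mul_le_of_le le_rfl (norm_mul_le _ _)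
      _ ≤ 1 * (‖b‖ * (C * s ^ n)) := by
          gcongr
          · exact ha _ (sub_nonneg.2 hs.2)
          · exact hf s hs.1.le
      _ = ‖b‖ * C * s ^ n := by ring
  calc ‖duhamelIntegral a b f t‖ ≤ ∫ s in (0:ℝ)..t, ‖b‖ * C * s ^ n :=
        intervalIntegral.norm_integral_le_of_norm_le ht (.of_forall hpointwise)
          (Continuous.intervalIntegrable (by fun_prop) _ _)
    _ = ‖b‖ * C * (t ^ (n + 1) / (n + 1)) := by
        rw [intervalIntegral.integral_const_mul, integral_pow, zero_pow n.succ_ne_zero, sub_zero]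

variable [NormedAlgebra ℚ 𝔸] [CompleteSpace 𝔸] (a b : 𝔸) {f g : ℝ → 𝔸}

theorem continuous_duhamelIntegral (hf : Continuous f) : Continuous (duhamelIntegral a b f) :=
  intervalIntegral.continuous_parametric_intervalIntegral_of_continuous
    (f := fun t s => exp ((t - s) • a) * b * f s) (by fun_prop) continuous_id

theorem duhamelIntegral_add (hf : Continuous f) (hg : Continuous g) (t : ℝ) :
    duhamelIntegral a b (f + g) t = duhamelIntegral a b f t + duhamelIntegral a b g t := by
  simp only [duhamelIntegral, Pi.add_apply, mul_add]
  exact intervalIntegral.integral_add (Continuous.intervalIntegrable (by fun_prop) _ _)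
    (Continuous.intervalIntegrable (by fun_prop) _ _)

theorem exp_smul_add_eq_add_duhamelIntegral (t : ℝ) :
    exp (t • (a + b)) = exp (t • a) + duhamelIntegral a b (fun s => exp (s • (a + b))) t := by
  have hderiv : ∀ s : ℝ, HasDerivAt (fun u : ℝ => exp ((t - u) • a) * exp (u • (a + b)))
      (exp ((t - s) • a) * b * exp (s • (a + b))) s := by
    intro s
    have hleft : HasDerivAt (fun u : ℝ => exp ((t - u) • a)) (-(exp ((t - s) • a) * a)) s := by
      simpa [Function.comp_def] using
        (hasDerivAt_exp_smul_const a (t - s)).scomp s ((hasDerivAt_id s).const_sub t)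
    exact (hleft.mul (hasDerivAt_exp_smul_const' (a + b) s)).congr_deriv (by noncomm_ring)
  have hFTC := intervalIntegral.integral_eq_sub_of_hasDerivAt (fun s _ => hderiv s)
    (Continuous.intervalIntegrable (by fun_prop) 0 t)
  rw [duhamelIntegral, hFTC]
  simp

end Duhamel

theorem CStarRing.norm_le_one_of_mem_unitary {E : Type*} [NormedRing E] [StarRing E] [CStarRing E]
    {U : E} (hU : U ∈ unitary E) : ‖U‖ ≤ 1 := by
  rcases subsingleton_or_nontrivial E with hE | hE
  · simp [Subsingleton.elim U 0]
  · exact (CStarRing.norm_of_mem_unitary hU).le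

theorem norm_exp_le_one_of_mem_skewAdjoint {E : Type*} [NormedRing E] [StarRing E] [CStarRing E]
    [NormedAlgebra ℚ E] [CompleteSpace E] {x : E} (hx : x ∈ skewAdjoint E) : ‖exp x‖ ≤ 1 :=
  CStarRing.norm_le_one_of_mem_unitary (exp_mem_unitary_of_mem_skewAdjoint hx)

section Matrix

-- Mathlib's lemmas on `exp` are stated for normed `ℚ`-algebras.
noncomputable instance Matrix.instNormedAlgebraRatL2Op {n : Type*} [Fintype n] [DecidableEq n] :
    NormedAlgebra ℚ (Matrix n n ℂ) :=
  NormedAlgebra.restrictScalars ℚ ℂ _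

variable {N : ℕ} (A B : Matrix (Fin N) (Fin N) ℂ)

theorem remainderIntegral_succ (l : ℕ) :
    remainderIntegral A B (l + 1) = duhamelIntegral A B (remainderIntegral A B l) := rfl

theorem dysonTerm_succ (l : ℕ) :
    dysonTerm A B (l + 1) = duhamelIntegral A B (dysonTerm A B l) := rfl

theorem continuous_remainderIntegral : ∀ l, Continuous (remainderIntegral A B l)
  | 0 => show Continuous fun t : ℝ => exp (t • (A + B)) by fun_prop
  | l + 1 => continuous_duhamelIntegral A B (continuous_remainderIntegral l)

theorem continuous_dysonTerm : ∀ l, Continuous (dysonTerm A B l)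
  | 0 => show Continuous fun t : ℝ => exp (t • A) by fun_prop
  | l + 1 => continuous_duhamelIntegral A B (continuous_dysonTerm l)

theorem remainderIntegral_eq_dysonTerm_add :
    ∀ l, remainderIntegral A B l = dysonTerm A B l + remainderIntegral A B (l + 1)
  | 0 => funext (exp_smul_add_eq_add_duhamelIntegral A B)
  | l + 1 => funext fun t => by
      rw [remainderIntegral_succ, remainderIntegral_eq_dysonTerm_add l,
        duhamelIntegral_add _ _ (continuous_dysonTerm A B l) (continuous_remainderIntegral A B _),
        Pi.add_apply, dysonTerm_succ, remainderIntegral_succ A B (l + 1)]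

theorem exp_add_eq_sum_dysonTerm_add_remainderIntegral (p : ℕ) :
    exp (A + B) = ∑ l ∈ Finset.range p, dysonTerm A B l 1 + remainderIntegral A B p 1 := by
  induction p with
  | zero => simp [remainderIntegral]
  | succ p ih =>
    rw [ih, remainderIntegral_eq_dysonTerm_add A B p, Finset.sum_range_succ, Pi.add_apply, add_assoc]

theorem norm_remainderIntegral_le (hA : ∀ τ : ℝ, 0 ≤ τ → ‖exp (τ • A)‖ ≤ 1)
    (hAB : ∀ τ : ℝ, 0 ≤ τ → ‖exp (τ • (A + B))‖ ≤ 1) :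
    ∀ (l : ℕ) {t : ℝ}, 0 ≤ t → ‖remainderIntegral A B l t‖ ≤ ‖B‖ ^ l / l ! * t ^ l
  | 0, t, ht => by simpa [remainderIntegral] using hAB t ht
  | l + 1, t, ht => by
      calc ‖remainderIntegral A B (l + 1) t‖
          ≤ ‖B‖ * (‖B‖ ^ l / l !) * (t ^ (l + 1) / (l + 1)) :=
            norm_duhamelIntegral_le B hA (fun s hs => norm_remainderIntegral_le hA hAB l hs) ht
        _ = ‖B‖ ^ (l + 1) / (l + 1)! * t ^ (l + 1) := by
            rw [Nat.factorial_succ]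
            push_cast
            field_simp
            ring

end Matrix

/-- **High-order variation-of-parameters formula.**
For anti-Hermitian matrices `A, B` and any positive integer `p`,
`e^{A+B} = e^A + Σ_{l=1}^{p-1} ∫₀¹⋯∫₀^{s_{l-1}} e^{A(1-s₁)} B ⋯ B e^{A s_l} ds + R_p(A,B)`
with `‖R_p(A,B)‖ ≤ ‖B‖^p / p!` in the spectral norm. -/
theorem high_order_variation_of_parameters {N : ℕ} (A B : Matrix (Fin N) (Fin N) ℂ)
    (hA : Aᴴ = -A) (hB : Bᴴ = -B) (p : ℕ) (hp : 1 ≤ p) :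
    exp (A + B) =
        exp A + (∑ l ∈ Finset.Icc 1 (p - 1), dysonTerm A B l 1) + remainderIntegral A B p 1
      ∧ ‖remainderIntegral A B p 1‖ ≤ ‖B‖ ^ p / (Nat.factorial p) := by
  have hA_skew : A ∈ skewAdjoint _ := skewAdjoint.mem_iff.2 hA
  have hAB_skew : A + B ∈ skewAdjoint _ := add_mem hA_skew (skewAdjoint.mem_iff.2 hB)
  have hcontraction : ∀ M ∈ skewAdjoint (Matrix (Fin N) (Fin N) ℂ), ∀ τ : ℝ, 0 ≤ τ →
      ‖exp (τ • M)‖ ≤ 1 :=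
    fun M hM τ _ => norm_exp_le_one_of_mem_skewAdjoint (skewAdjoint.smul_mem τ hM)
  have hbound := norm_remainderIntegral_le A B (hcontraction A hA_skew)
    (hcontraction _ hAB_skew) p zero_le_one
  refine ⟨?_, by simpa using hbound⟩
  obtain ⟨q, rfl⟩ := Nat.exists_eq_add_of_le' hp
  rw [exp_add_eq_sum_dysonTerm_add_remainderIntegral A B (q + 1), Finset.range_eq_Ico,
    Finset.sum_eq_sum_Ico_succ_bot (by omega : 0 < q + 1), Nat.add_sub_cancel,
    Finset.Ico_add_one_right_eq_Icc]
  simp only [dysonTerm, one_smul, add_assoc]
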